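/- If w is a finite superposition of outgoing modes whose tangential trace on the cross-section x3 = s is w × ν = Σ_m a_m ∇_Σ u_m − (1/k) Σ_n i g_n b_n curl⃗_Σ v_n with all h_m, g_n either positive real or of the form iτ with τ > 0, then the duality pairing Im ∫_{Σ_s} ((ν × curl w) × ν) · conj(w × ν) dS is nonpositive. -/
import Mathlib

open Real Complex

lemma aux1 (z h : ℂ) (r : ℝ) (hr : 0 ≤ r) (hre : 0 ≤ h.re) :
    (z * (-Complex.I * h) * (starRingEnd ℂ) z * (r : ℂ)).im ≤ 0 := by
  have e : z * (-Complex.I * h) * (starRingEnd ℂ) z * (r : ℂ)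
      = (-Complex.I * h) * (z * (starRingEnd ℂ) z) * (r : ℂ) := by ring
  rw [e, Complex.mul_conj]
  simp [Complex.mul_im, Complex.mul_re]
  nlinarith [mul_nonneg (mul_nonneg hre (Complex.normSq_nonneg z)) hr]

lemma aux2 (bb gg : ℂ) (k μ r : ℝ) (hk : 0 < k) (hr : 0 ≤ r) (hg0 : gg ≠ 0)
    (hgre : 0 ≤ gg.re) (hg2 : gg ^ 2 = (k : ℂ) ^ 2 - (μ : ℂ) ^ 2) :
    ((1 / (k : ℂ)) * Complex.I * gg * bb *
      (Complex.I * gg - (μ : ℂ) ^ 2 / (Complex.I * gg)) *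
      (starRingEnd ℂ) (-(1 / (k : ℂ)) * Complex.I * gg * bb) * (r : ℂ)).im ≤ 0 := by
  have hIg : Complex.I * gg ≠ 0 := by simp [hg0]
  have hC : Complex.I * gg - (μ : ℂ) ^ 2 / (Complex.I * gg)
      = -(k : ℂ) ^ 2 * (Complex.I * gg)⁻¹ := by
    field_simp
    linear_combination gg ^ 2 * Complex.I_sq - hg2
  set A : ℂ := (1 / (k : ℂ)) * Complex.I * gg * bb with hA
  have e : A * (Complex.I * gg - (μ : ℂ) ^ 2 / (Complex.I * gg)) *
      (starRingEnd ℂ) (-(1 / (k : ℂ)) * Complex.I * gg * bb) * (r : ℂ)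
      = -(A * (starRingEnd ℂ) A) * (Complex.I * gg - (μ : ℂ) ^ 2 / (Complex.I * gg)) * (r : ℂ) := by
    have : (starRingEnd ℂ) (-(1 / (k : ℂ)) * Complex.I * gg * bb) = -(starRingEnd ℂ) A := by
      rw [hA]; push_cast [map_mul, map_neg]; ring
    rw [this]; ring
  rw [e, Complex.mul_conj, hC]
  have him : ((-(k : ℂ) ^ 2 * (Complex.I * gg)⁻¹)).im = k ^ 2 * gg.re / Complex.normSq (Complex.I * gg) := by
    simp [Complex.mul_im, Complex.inv_im, Complex.inv_re, Complex.mul_re,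
      ← Complex.ofReal_pow]
    ring
  have h1 : (-(Complex.normSq A : ℂ) * (-(k : ℂ) ^ 2 * (Complex.I * gg)⁻¹) * (r : ℂ)).im
      = -(Complex.normSq A) * r * ((-(k : ℂ) ^ 2 * (Complex.I * gg)⁻¹)).im := by
    simp [Complex.mul_im, Complex.mul_re]; ring
  rw [h1, him]
  have := Complex.normSq_nonneg A
  have h2 : 0 ≤ k ^ 2 * gg.re / Complex.normSq (Complex.I * gg) :=
    div_nonneg (mul_nonneg (sq_nonneg k) hgre) (Complex.normSq_nonneg _)
  nlinarith [mul_nonneg (mul_nonneg this hr) h2]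


/-- If `w` is a finite superposition of outgoing modes with tangential trace
`w × ν = Σ_m a_m ∇_Σ u_m − (1/k) Σ_n i g_n b_n curl⃗_Σ v_n` on `Σ_s`, and all `h_m, g_n`
are either positive real or positive-imaginary, then the duality pairing
`Im ∫_{Σ_s} ((ν × curl w) × ν) · conj(w × ν) dS` is nonpositive. By the modal trace
formulas and the mutual orthogonality of the families `∇_Σ u_m` (with squared norms
`λ_m² ab/4`) and `curl⃗_Σ v_n` (with squared norms `μ_n² ab/4`), the pairing equals
`Σ_m a_m(−i h_m) conj(a_m) λ_m² ab/4
  + Σ_n (1/k) i g_n b_n (i g_n − μ_n²/(i g_n)) conj(−(1/k) i g_n b_n) μ_n² ab/4`. -/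
theorem stmt15 (a b k : ℝ) (ha : 0 < a) (hb : 0 < b) (hk : 0 < k)
    (M N : ℕ) (am : Fin M → ℂ) (bn : Fin N → ℂ)
    (lam mu : Fin M → ℝ) (mun : Fin N → ℝ)
    (h : Fin M → ℂ) (g : Fin N → ℂ)
    (hlam : ∀ m, 0 < lam m) (hmun : ∀ n, 0 < mun n)
    (hh2 : ∀ m, (h m) ^ 2 = (k : ℂ) ^ 2 - ((lam m : ℝ) : ℂ) ^ 2)
    (hg2 : ∀ n, (g n) ^ 2 = (k : ℂ) ^ 2 - ((mun n : ℝ) : ℂ) ^ 2)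
    -- each h_m is either positive real or positive imaginary (branch in {Im z ≥ 0})
    (hhbranch : ∀ m, ((h m).im = 0 ∧ 0 < (h m).re) ∨ ((h m).re = 0 ∧ 0 < (h m).im))
    (hgbranch : ∀ n, ((g n).im = 0 ∧ 0 < (g n).re) ∨ ((g n).re = 0 ∧ 0 < (g n).im)) :
    (∑ m : Fin M,
        am m * (-Complex.I * h m) * (starRingEnd ℂ) (am m) *
          (((lam m) ^ 2 * (a * b / 4) : ℝ) : ℂ)
      + ∑ n : Fin N,
          (1 / (k : ℂ)) * Complex.I * g n * bn n *
            (Complex.I * g n - ((mun n : ℝ) : ℂ) ^ 2 / (Complex.I * g n)) *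
            (starRingEnd ℂ) (-(1 / (k : ℂ)) * Complex.I * g n * bn n) *
            (((mun n) ^ 2 * (a * b / 4) : ℝ) : ℂ)).im ≤ 0 := by
  have e1 : ∀ m : Fin M, (am m * (-Complex.I * h m) * (starRingEnd ℂ) (am m) *
      (((lam m) ^ 2 * (a * b / 4) : ℝ) : ℂ)).im ≤ 0 := by
    intro m
    apply aux1
    · positivity
    · rcases hhbranch m with ⟨_, hp⟩ | ⟨hz, _⟩
      · exact le_of_lt hp
      · exact le_of_eq hz.symm
  have e2 : ∀ n : Fin N, ((1 / (k : ℂ)) * Complex.I * g n * bn n *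
      (Complex.I * g n - ((mun n : ℝ) : ℂ) ^ 2 / (Complex.I * g n)) *
      (starRingEnd ℂ) (-(1 / (k : ℂ)) * Complex.I * g n * bn n) *
      (((mun n) ^ 2 * (a * b / 4) : ℝ) : ℂ)).im ≤ 0 := by
    intro n
    apply aux2 (bn n) (g n) k (mun n) _ hk
    · positivity
    · intro h0
      rcases hgbranch n with ⟨_, hp⟩ | ⟨_, hp⟩ <;> simp [h0] at hp
    · rcases hgbranch n with ⟨_, hp⟩ | ⟨hz, _⟩
      · exact le_of_lt hp
      · exact le_of_eq hz.symm
    · exact hg2 n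
  rw [Complex.add_im, Complex.im_sum, Complex.im_sum]
  have s1 := Finset.sum_nonpos (fun m _ => e1 m) (s := Finset.univ)
  have s2 := Finset.sum_nonpos (fun n _ => e2 n) (s := Finset.univ)
  linarith
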